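/- Let χ* be a primitive Dirichlet character modulo c*, let c be a positive multiple of c*, and let χ be the Dirichlet character modulo c induced by χ*. Then for every positive integer a, g(χ*, c, a) = τ(χ*) · ∑_{d | gcd(a, c/c*)} d · χ*(c/(c*d)) · conj(χ*)(a/d) · μ(c/(c*d)). -/

import Mathlib

open scoped BigOperators

noncomputable def eC (x : ℝ) : ℂ := Complex.exp (2 * Real.pi * Complex.I * x)

/-- Gauss sum of the character modulo `c` induced by `χs` (defined modulo `cs`, with `cs ∣ c`). -/
noncomputable def gSum {cs : ℕ} (χs : DirichletCharacter ℂ cs) (c : ℕ) (m : ℤ) : ℂ :=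
  ∑ u ∈ (Finset.range c).filter fun u => Nat.Coprime u c,
    χs ((u : ℕ) : ZMod cs) * eC ((m : ℝ) * (u : ℝ) / (c : ℝ))

/-!
Write `c = c* n`. Möbius inversion removes the coprimality condition:
`g(χ*, c, a) = ∑_{e ∣ c} μ(e) χ*(e) S(c/e)`, where `S(N) = ∑_{v mod N} χ*(v) e(av/N)`
(`charExpSum`) runs over all residues. Only `e ∣ n` contribute, since otherwise `e` shares a
factor with `c*` and `χ*(e) = 0`.
Splitting `v = c* t + w`, the sum `S(c* m)` factors into the geometric sum `∑_{t mod m} e(at/m)`,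
which vanishes unless `m ∣ a`, times a sum of level `c*` that primitivity evaluates to
`conj(χ*)(a/m) τ(χ*)`. Putting `d = n/e` gives the formula.
-/

open Finset ArithmeticFunction

lemma eC_add (x y : ℝ) : eC (x + y) = eC x * eC y := by
  rw [eC, eC, eC, ← Complex.exp_add]
  push_cast
  ring_nf

lemma eC_intCast_mul_div {N : ℕ} [NeZero N] (m : ℤ) (u : ℕ) :
    eC (m * u / N) = ZMod.stdAddChar ((m : ZMod N) * (u : ZMod N)) := by
  rw [show (m : ZMod N) * (u : ZMod N) = ((m * u : ℤ) : ZMod N) by push_cast; rfl,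
    ZMod.stdAddChar_coe, eC]
  push_cast
  ring_nf

lemma sum_range_natCast_zmod {M : Type*} [AddCommMonoid M] {N : ℕ} [NeZero N]
    (f : ZMod N → M) :
    ∑ u ∈ range N, f u = ∑ x : ZMod N, f x :=
  sum_nbij' (fun u ↦ (u : ZMod N)) ZMod.val (fun _ _ ↦ mem_univ _)
    (fun x _ ↦ mem_range.mpr x.val_lt) (fun _ hu ↦ ZMod.val_natCast_of_lt (mem_range.mp hu))
    (fun x _ ↦ ZMod.natCast_zmod_val x) (fun _ _ ↦ rfl)

lemma sum_range_eC_mul_div {m : ℕ} [NeZero m] (a : ℤ) :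
    ∑ t ∈ range m, eC (a * t / m) = if (m : ℤ) ∣ a then (m : ℂ) else 0 := by
  simp_rw [eC_intCast_mul_div, mul_comm (a : ZMod m)]
  rw [sum_range_natCast_zmod (fun x ↦ ZMod.stdAddChar (x * (a : ZMod m))),
    AddChar.sum_mulShift _ (ZMod.isPrimitive_stdAddChar m)]
  simp only [ZMod.intCast_zmod_eq_zero_iff_dvd, ZMod.card, Nat.cast_ite, Nat.cast_zero]

lemma sum_range_mul_eq_sum_sum {M : Type*} [AddCommMonoid M] (f : ℕ → M) (k m : ℕ) :
    ∑ v ∈ range (k * m), f v = ∑ t ∈ range m, ∑ w ∈ range k, f (k * t + w) := by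
  induction m with
  | zero => simp
  | succ m ih => rw [Nat.mul_succ, sum_range_add, ih, sum_range_succ]

noncomputable def charExpSum {cs : ℕ} (χ : DirichletCharacter ℂ cs) (N : ℕ) (m : ℤ) :
    ℂ :=
  ∑ v ∈ range N, χ (v : ZMod cs) * eC (m * v / N)

section SameLevel

variable {N : ℕ} (χ : DirichletCharacter ℂ N)

lemma gSum_self_eq_charExpSum (m : ℤ) : gSum χ N m = charExpSum χ N m := by
  refine sum_subset (filter_subset _ _) fun u hu hu' ↦ ?_
  have hunit : ¬ IsUnit (u : ZMod N) := by
    rw [ZMod.isUnit_iff_coprime]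
    simpa [hu] using hu'
  rw [χ.map_nonunit hunit, zero_mul]

lemma charExpSum_self_eq_gaussSum [NeZero N] (m : ℤ) :
    charExpSum χ N m = gaussSum χ (ZMod.stdAddChar.mulShift (m : ZMod N)) := by
  simp_rw [charExpSum, eC_intCast_mul_div, gaussSum, AddChar.mulShift_apply]
  exact sum_range_natCast_zmod (fun x ↦ χ x * ZMod.stdAddChar ((m : ZMod N) * x))

lemma charExpSum_self_of_isPrimitive [NeZero N] {χ : DirichletCharacter ℂ N}
    (hχ : χ.IsPrimitive) (m : ℤ) :
    charExpSum χ N m = starRingEnd ℂ (χ m) * gSum χ N 1 := by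
  rw [gSum_self_eq_charExpSum, charExpSum_self_eq_gaussSum, charExpSum_self_eq_gaussSum,
    gaussSum_mulShift_of_isPrimitive _ hχ, Int.cast_one, AddChar.mulShift_one, starRingEnd_apply,
    MulChar.star_apply']

end SameLevel

lemma charExpSum_mul_of_isPrimitive {cs : ℕ} [NeZero cs] {χ : DirichletCharacter ℂ cs}
    (hχ : χ.IsPrimitive) {m : ℕ} [NeZero m] (a : ℤ) :
    charExpSum χ (cs * m) a =
      if (m : ℤ) ∣ a then m * (starRingEnd ℂ (χ ↑(a / m)) * gSum χ cs 1) else 0 := by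
  have hcs : (cs : ℝ) ≠ 0 := Nat.cast_ne_zero.mpr (NeZero.ne cs)
  have hm : (m : ℝ) ≠ 0 := Nat.cast_ne_zero.mpr (NeZero.ne m)
  have hterm : ∀ t w : ℕ,
      χ ((cs * t + w : ℕ) : ZMod cs) * eC (a * (cs * t + w : ℕ) / (cs * m : ℕ)) =
        χ w * eC (a * w / (cs * m : ℕ)) * eC (a * t / m) := by
    intro t w
    have hsplit : (a * (cs * t + w : ℕ) / (cs * m : ℕ) : ℝ) =
        a * w / (cs * m : ℕ) + a * t / m := by
      push_cast
      field_simp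
      ring
    rw [hsplit, eC_add, Nat.cast_add, Nat.cast_mul, ZMod.natCast_self, zero_mul, zero_add,
      mul_assoc]
  rw [charExpSum, sum_range_mul_eq_sum_sum, sum_comm]
  simp_rw [hterm, ← mul_sum, ← sum_mul, sum_range_eC_mul_div]
  split_ifs with hma
  · obtain ⟨k, rfl⟩ := hma
    have hscale : ∀ w : ℕ, (((m * k : ℤ) : ℝ) * w / (cs * m : ℕ) : ℝ) = k * w / cs := by
      intro w
      push_cast
      field_simp
    simp_rw [hscale, Int.mul_ediv_cancel_left _ (Int.natCast_ne_zero.mpr (NeZero.ne m))]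
    rw [← charExpSum, charExpSum_self_of_isPrimitive hχ]
    ring
  · rw [mul_zero]

open scoped ArithmeticFunction.Moebius

lemma Nat.filter_divisors_dvd_eq_divisors_gcd {n : ℕ} (hn : n ≠ 0) (a : ℕ) :
    {d ∈ n.divisors | d ∣ a} = (a.gcd n).divisors := by
  ext d
  simp only [mem_filter, Nat.mem_divisors, Nat.dvd_gcd_iff, ne_eq, hn, not_false_eq_true, and_true,
    Nat.gcd_eq_zero_iff, and_false]
  exact and_comm

lemma sum_divisors_moebius {R : Type*} [Ring R] (n : ℕ) :
    ∑ d ∈ n.divisors, (μ d : R) = if n = 1 then 1 else 0 := by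
  have h := congrArg (· n) (coe_moebius_mul_coe_zeta (R := R))
  simpa only [coe_mul_zeta_apply, intCoe_apply, one_apply] using h

lemma sum_range_filter_dvd {M : Type*} [AddCommMonoid M] {e c : ℕ} (he : e ≠ 0) (hec : e ∣ c)
    (F : ℕ → M) : ∑ u ∈ range c with e ∣ u, F u = ∑ v ∈ range (c / e), F (e * v) := by
  refine (sum_nbij' (e * ·) (· / e) ?_ ?_ ?_ ?_ ?_).symm
  · intro v hv
    rw [mem_range, Nat.lt_div_iff_mul_lt' hec] at hv
    exact mem_filter.mpr ⟨mem_range.mpr hv, dvd_mul_right e v⟩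
  · intro u hu
    simp only [mem_filter, mem_range] at hu ⊢
    exact (Nat.div_lt_div_of_lt_of_dvd hec hu.1)
  · intro v _
    exact Nat.mul_div_cancel_left v (Nat.pos_of_ne_zero he)
  · intro u hu
    exact Nat.mul_div_cancel' (mem_filter.mp hu).2
  · intro _ _
    rfl

lemma sum_filter_coprime_eq_sum_divisors_moebius {R : Type*} [Ring R] {c : ℕ} (hc : c ≠ 0)
    (F : ℕ → R) :
    ∑ u ∈ range c with u.Coprime c, F u =
      ∑ e ∈ c.divisors, μ e * ∑ v ∈ range (c / e), F (e * v) := by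
  have hind : ∀ u,
      (if u.Coprime c then F u else 0) = ∑ e ∈ c.divisors with e ∣ u, μ e * F u := by
    intro u
    rw [← sum_mul, Nat.filter_divisors_dvd_eq_divisors_gcd hc, sum_divisors_moebius]
    simp only [Nat.Coprime, ite_mul, one_mul, zero_mul]
  rw [sum_filter, sum_congr rfl fun u _ ↦ hind u]
  simp_rw [sum_filter]
  rw [sum_comm]
  refine sum_congr rfl fun e he ↦ ?_
  rw [← sum_filter, ← mul_sum,
    sum_range_filter_dvd (Nat.ne_of_gt (Nat.pos_of_mem_divisors he)) (Nat.dvd_of_mem_divisors he)]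

lemma gSum_eq_sum_divisors {cs : ℕ} (χ : DirichletCharacter ℂ cs) {c : ℕ} (hc : c ≠ 0)
    (a : ℤ) :
    gSum χ c a = ∑ e ∈ c.divisors, μ e * (χ e * charExpSum χ (c / e) a) := by
  rw [gSum, sum_filter_coprime_eq_sum_divisors_moebius hc]
  refine sum_congr rfl fun e he ↦ ?_
  have he0 : (e : ℝ) ≠ 0 := Nat.cast_ne_zero.mpr (Nat.ne_of_gt (Nat.pos_of_mem_divisors he))
  congr 1
  rw [charExpSum, mul_sum, Nat.cast_div (Nat.dvd_of_mem_divisors he) he0]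
  refine sum_congr rfl fun v _ ↦ ?_
  rw [Nat.cast_mul, map_mul, Nat.cast_mul, mul_assoc]
  congr 3
  field_simp

lemma gSum_mul_eq_sum_divisors {cs n : ℕ} (χ : DirichletCharacter ℂ cs) (h : cs * n ≠ 0)
    (a : ℤ) :
    gSum χ (cs * n) a = ∑ e ∈ n.divisors, μ e * (χ e * charExpSum χ (cs * n / e) a) := by
  have hn : n ≠ 0 := right_ne_zero_of_mul h
  rw [gSum_eq_sum_divisors χ h]
  refine (sum_subset (Nat.divisors_subset_of_dvd h (dvd_mul_left n cs)) fun e he hen ↦ ?_).symm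
  have hunit : ¬ IsUnit (e : ZMod cs) := by
    rw [ZMod.isUnit_iff_coprime]
    exact fun hcop ↦
      hen (Nat.mem_divisors.mpr ⟨hcop.dvd_of_dvd_mul_left (Nat.dvd_of_mem_divisors he), hn⟩)
  rw [χ.map_nonunit hunit, zero_mul, mul_zero]

theorem gauss_sum_induced_general {cs : ℕ} (χs : DirichletCharacter ℂ cs)
    (hprim : χs.IsPrimitive) {c : ℕ} (hc : 0 < c) (hdvd : cs ∣ c)
    (a : ℕ) :
    gSum χs c (a : ℤ) =
      gSum χs cs 1 *
        ∑ d ∈ (Nat.gcd a (c / cs)).divisors,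
          (d : ℂ) * χs ((c / (cs * d) : ℕ) : ZMod cs) *
            (starRingEnd ℂ) (χs ((a / d : ℕ) : ZMod cs)) *
            ((ArithmeticFunction.moebius (c / (cs * d)) : ℤ) : ℂ) := by
  obtain ⟨n, rfl⟩ := hdvd
  have hcs : 0 < cs := Nat.pos_of_mul_pos_right hc
  have hn : n ≠ 0 := right_ne_zero_of_mul hc.ne'
  have : NeZero cs := ⟨hcs.ne'⟩
  rw [gSum_mul_eq_sum_divisors χs hc.ne', ← Nat.sum_div_divisors n,
    Nat.mul_div_cancel_left n hcs, ← Nat.filter_divisors_dvd_eq_divisors_gcd hn, sum_filter,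
    mul_sum]
  refine sum_congr rfl fun d hd ↦ ?_
  have hdn := Nat.dvd_of_mem_divisors hd
  have : NeZero d := ⟨Nat.ne_of_gt (Nat.pos_of_mem_divisors hd)⟩
  rw [Nat.mul_div_assoc cs (Nat.div_dvd_of_dvd hdn), Nat.div_div_self hdn hn,
    charExpSum_mul_of_isPrimitive hprim, Nat.mul_div_mul_left _ _ hcs]
  simp only [Int.natCast_dvd_natCast, ← Int.natCast_div, Int.cast_natCast]
  split_ifs
  · ring
  · simp only [mul_zero]

/-- Gauss sums of non-primitive characters (Miyake, Lemma 3.1.3.(2)):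
`g(χ*, c, a) = τ(χ*) ∑_{d | (a, c/c*)} d χ*(c/(c*d)) conj(χ*)(a/d) μ(c/(c*d))`. -/
theorem gauss_sum_induced {cs : ℕ} (hcs : 0 < cs) (χs : DirichletCharacter ℂ cs)
    (hprim : χs.IsPrimitive) {c : ℕ} (hc : 0 < c) (hdvd : cs ∣ c)
    (a : ℕ) (ha : 0 < a) :
    gSum χs c (a : ℤ) =
      gSum χs cs 1 *
        ∑ d ∈ (Nat.gcd a (c / cs)).divisors,
          (d : ℂ) * χs ((c / (cs * d) : ℕ) : ZMod cs) *
            (starRingEnd ℂ) (χs ((a / d : ℕ) : ZMod cs)) *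
            ((ArithmeticFunction.moebius (c / (cs * d)) : ℤ) : ℂ) :=
  gauss_sum_induced_general χs hprim hc hdvd a
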